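/- Let δ = max_{i≥0} d_i/p^i. With ord_R as defined (ord_R = ord_π if m̃ = 1; the (p^θ, π)-adic order with θ = 1/(p^{m̃−2}(p−1)) if m̃ ≥ 2), the coefficients α_u of E_f(x) = Σ_u α_u x^u satisfy ord_R(α_u) ≥ u/δ for all u ≥ 0. -/

import Mathlib

open PowerSeries
open scoped Classical

noncomputable section

/-- The power series `Σ_{i≥0} X^(p^i − 1)`, the logarithmic derivative of the
Artin–Hasse exponential. -/
def ahLogDeriv (p : ℕ) (R : Type*) [CommRing R] : PowerSeries R :=
  PowerSeries.mk fun n => if ∃ i : ℕ, n + 1 = p ^ i then 1 else 0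

/-- `E` is the Artin–Hasse exponential `exp(Σ_{i≥0} X^(p^i)/p^i)`: over a characteristic-zero
ring with no additive torsion this is equivalent to `E(0) = 1` together with the logarithmic
differential equation `E' = E · Σ_{i≥0} X^(p^i−1)`. -/
def IsArtinHasse (p : ℕ) {R : Type*} [CommRing R] (E : PowerSeries R) : Prop :=
  PowerSeries.constantCoeff E = 1 ∧
    (PowerSeries.derivative R) E = E * ahLogDeriv p R

/-- Composition `f(g)` of formal power series (intended for `g` with zero constant term,
in which case this is the usual substitution). -/
def psComp {R : Type*} [CommRing R] (f g : PowerSeries R) : PowerSeries R :=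
  PowerSeries.mk fun n => ∑ k ∈ Finset.range (n + 1),
    PowerSeries.coeff k f * PowerSeries.coeff n (g ^ k)

/-- `w = π_i`: the unique power series with zero constant term satisfying
`E(π_i) = (1+T)^(p^i)`. -/
def IsPiAH (p : ℕ) {R : Type*} [CommRing R] (E : PowerSeries R) (i : ℕ)
    (w : PowerSeries R) : Prop :=
  PowerSeries.constantCoeff w = 0 ∧ psComp E w = (1 + PowerSeries.X) ^ p ^ i

/-- `bin z n` is the binomial coefficient `C(z, n)`, characterized by
`n! · bin z n = z(z−1)⋯(z−n+1)`. -/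
def IsBinomial {R : Type*} [CommRing R] (bin : R → ℕ → R) : Prop :=
  ∀ z n, (n.factorial : R) * bin z n = ∏ i ∈ Finset.range n, (z - (i : R))

/-- The binomial series `(1+T)^z = Σ_n C(z,n) Tⁿ`. -/
def onePlusTPow {R : Type*} [CommRing R] (bin : R → ℕ → R) (z : R) : PowerSeries R :=
  PowerSeries.mk fun n => bin z n

/-- `F^z = Σ_n C(z,n) (F−1)ⁿ` for a power series `F` with constant term `1`. -/
def psPow {R : Type*} [CommRing R] (bin : R → ℕ → R) (z : R) (F : PowerSeries R) :
    PowerSeries R :=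
  PowerSeries.mk fun n => ∑ k ∈ Finset.range (n + 1),
    bin z k * PowerSeries.coeff n ((F - 1) ^ k)

/-- The canonical ring map `ℤ_p = W(𝔽_p) → W(F)` for a ring `F` of characteristic `p`. -/
def toWitt (p : ℕ) [Fact p.Prime] (F : Type*) [CommRing F] [CharP F p] :
    ℤ_[p] →+* WittVector p F :=
  (WittVector.map (ZMod.castHom dvd_rfl F)).comp (WittVector.equiv p).symm.toRingHom

/-- `E(cst · η · x^u)` as a power series in `x` whose coefficients are power series
(in the variable of `η`). -/
def EmonoSub {R : Type*} [CommRing R] (E : PowerSeries R) (eta : PowerSeries R) (cst : R)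
    (u : ℕ) : PowerSeries (PowerSeries R) :=
  if u = 0 then PowerSeries.C (psComp E (PowerSeries.C cst * eta))
  else PowerSeries.mk fun v =>
    if u ∣ v then PowerSeries.C (PowerSeries.coeff (v / u) E * cst ^ (v / u)) * eta ^ (v / u)
    else 0

/-- `E_h(x, η) = ∏_{u=0}^{d'} E(η ĥ_u x^u)` for `h` with (lifted) coefficients `co u`. -/
def Eh {R : Type*} [CommRing R] (E : PowerSeries R) (eta : PowerSeries R) (co : ℕ → R)
    (d' : ℕ) : PowerSeries (PowerSeries R) :=
  ∏ u ∈ Finset.range (d' + 1), EmonoSub E eta (co u) u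

/-- The partial product `∏_{i<n} E_{f_i}(x, π_i)`. -/
def EfPartial {R : Type*} [CommRing R] (E : PowerSeries R) (Pi : ℕ → PowerSeries R)
    (co : ℕ → ℕ → R) (d : ℕ → ℕ) (n : ℕ) : PowerSeries (PowerSeries R) :=
  ∏ i ∈ Finset.range n, Eh E (Pi i) (co i) (d i)

/-- `Ef = E_f(x) = ∏_{i=0}^∞ E_{f_i}(x, π_i)`, as the `(p,T)`-adic limit of the partial
products: the `x^u`-coefficient of `E_f − ∏_{i<n} E_{f_i}` lies in `(p, T)^(n+1)`. -/
def IsEfProd (p : ℕ) {R : Type*} [CommRing R] (E : PowerSeries R) (Pi : ℕ → PowerSeries R)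
    (co : ℕ → ℕ → R) (d : ℕ → ℕ) (Ef : PowerSeries (PowerSeries R)) : Prop :=
  ∀ n u : ℕ,
    PowerSeries.coeff u Ef - PowerSeries.coeff u (EfPartial E Pi co d n)
      ∈ (Ideal.span {(p : PowerSeries R), PowerSeries.X}) ^ (n + 1)

/-- `ord_R(g) ≥ r`:  for `mt = 1` the `T`-adic order of `g` is at least `r`; for `mt ≥ 2`,
writing `g = Σ_j c_j T^j`, `min_j (ord_p(c_j)·p^(mt−2)(p−1) + j) ≥ r`
(the `(p^θ, T)`-adic order with `θ = 1/(p^(mt−2)(p−1))`, normalized by `ord_R(T) = 1`). -/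
def ordRge (p : ℕ) {R : Type*} [CommRing R] (mt : ℕ) (g : PowerSeries R) (r : ℚ) : Prop :=
  ∀ j n : ℕ, ¬ ((p : R) ^ (n + 1) ∣ PowerSeries.coeff j g) →
    (if mt = 1 then r ≤ (j : ℚ)
     else r ≤ (n : ℚ) * ((p : ℚ) ^ (mt - 2) * ((p : ℚ) - 1)) + (j : ℚ))
/-!
The weight `n·p^(mt−2)(p−1) + j` defining `ord_R` is additive in `(n, j)`, so `ord_R` is
superadditive on products and it suffices to bound every factor `E(π_i ĥ_u x^u)` with `u ≤ d_i`,
that is, to show `ord_R(π_i) ≥ d_i/δ`. Comparing `T^j`-coefficients in `E(π_i) = (1+T)^(p^i)`,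
where `E(X) ≡ 1 + X mod X²`, gives `p^(i − ⌊log_p j⌋) ∣ [T^j] π_i` by induction on `j`, because
that power of `p` divides `C(p^i, j)` (Kummer). Hence `ord_R(π_i) ≥ min(p^i, p^(mt−1)) ≥ d_i/δ`,
using `d_i ≤ δ p^i` and `d_i ≤ D = d_(mt−1) ≤ δ p^(mt−1)`. Finally `E_f` agrees with the product
over `i < n + j` modulo `(p, T)^(n+j+1)`, hence in its `T^j`-coefficients modulo `p^(n+1)`.
-/

/-- `ord_R(p^n T^j)`. -/
def ordRWeight (p mt n j : ℕ) : ℚ :=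
  if mt = 1 then (j : ℚ) else (n : ℚ) * ((p : ℚ) ^ (mt - 2) * ((p : ℚ) - 1)) + (j : ℚ)

theorem ordRWeight_add (p mt n₁ n₂ j₁ j₂ : ℕ) :
    ordRWeight p mt n₁ j₁ + ordRWeight p mt n₂ j₂ = ordRWeight p mt (n₁ + n₂) (j₁ + j₂) := by
  unfold ordRWeight
  split_ifs <;> push_cast <;> ring

theorem ordRWeight_mono_left {p : ℕ} (hp : 1 ≤ p) (mt j : ℕ) :
    Monotone fun n => ordRWeight p mt n j := by
  intro n n' hn
  have hp' : (1 : ℚ) ≤ p := by exact_mod_cast hp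
  have hn' : (n : ℚ) ≤ n' := by exact_mod_cast hn
  simp only [ordRWeight]
  split_ifs
  · exact le_rfl
  · have : (0 : ℚ) ≤ (p : ℚ) ^ (mt - 2) * ((p : ℚ) - 1) := by
      have : (0 : ℚ) ≤ (p : ℚ) - 1 := by linarith
      positivity
    gcongr

theorem ordRWeight_nonneg {p : ℕ} (hp : 1 ≤ p) (mt n j : ℕ) : 0 ≤ ordRWeight p mt n j :=
  calc (0 : ℚ) ≤ ordRWeight p mt 0 j := by unfold ordRWeight; split_ifs <;> simp
    _ ≤ ordRWeight p mt n j := ordRWeight_mono_left hp mt j n.zero_le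

section ordRge

variable {p mt : ℕ} {R : Type*} [CommRing R] {g h : PowerSeries R} {r s : ℚ}

theorem ordRge_iff : ordRge p mt g r ↔
    ∀ j n : ℕ, ¬ (p : R) ^ (n + 1) ∣ coeff j g → r ≤ ordRWeight p mt n j := by
  unfold ordRge ordRWeight
  split_ifs <;> rfl

theorem ordRge_of_nonpos (hp : 1 ≤ p) (g : PowerSeries R) (hr : r ≤ 0) : ordRge p mt g r :=
  ordRge_iff.2 fun j n _ => hr.trans (ordRWeight_nonneg hp mt n j)

theorem ordRge_zero (p mt : ℕ) (r : ℚ) : ordRge p mt (0 : PowerSeries R) r :=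
  ordRge_iff.2 fun j n hj => absurd (by simp) hj

theorem ordRge.mono (hg : ordRge p mt g r) (hsr : s ≤ r) : ordRge p mt g s :=
  ordRge_iff.2 fun j n hj => hsr.trans (ordRge_iff.1 hg j n hj)

theorem ordRge.map {S : Type*} [CommRing S] (f : R →+* S) (hg : ordRge p mt g r) :
    ordRge p mt (map f g) r :=
  ordRge_iff.2 fun j n hj =>
    ordRge_iff.1 hg j n fun hdvd => hj (by simpa [coeff_map] using map_dvd f hdvd)

theorem ordRge.C_mul (x : R) (hg : ordRge p mt g r) : ordRge p mt (C x * g) r :=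
  ordRge_iff.2 fun j n hj =>
    ordRge_iff.1 hg j n fun hdvd => hj (by rw [coeff_C_mul]; exact hdvd.mul_left x)

theorem ordRge_sum {ι : Type*} (t : Finset ι) (f : ι → PowerSeries R)
    (hf : ∀ i ∈ t, ordRge p mt (f i) r) : ordRge p mt (∑ i ∈ t, f i) r := by
  refine ordRge_iff.2 fun j n hj => ?_
  obtain ⟨i, hi, hndvd⟩ : ∃ i ∈ t, ¬ (p : R) ^ (n + 1) ∣ coeff j (f i) := by
    by_contra! H
    exact hj (by rw [map_sum]; exact Finset.dvd_sum H)
  exact ordRge_iff.1 (hf i hi) j n hndvd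

theorem ordRge.mul (hp : 1 ≤ p) (hg : ordRge p mt g r) (hh : ordRge p mt h s) :
    ordRge p mt (g * h) (r + s) := by
  refine ordRge_iff.2 fun j n hj => ?_
  obtain ⟨⟨a, b⟩, hab, hndvd⟩ : ∃ x ∈ Finset.HasAntidiagonal.antidiagonal j,
      ¬ (p : R) ^ (n + 1) ∣ coeff x.1 g * coeff x.2 h := by
    by_contra! H
    exact hj (by rw [coeff_mul]; exact Finset.dvd_sum H)
  rw [Finset.HasAntidiagonal.mem_antidiagonal] at hab
  -- the exact powers of `p` dividing the two factors, capped at `n + 1`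
  set n₁ := Nat.findGreatest (fun m => (p : R) ^ m ∣ coeff a g) (n + 1)
  set n₂ := Nat.findGreatest (fun m => (p : R) ^ m ∣ coeff b h) (n + 1)
  have h₁ : (p : R) ^ n₁ ∣ coeff a g :=
    Nat.findGreatest_spec (P := fun m => (p : R) ^ m ∣ coeff a g) (Nat.zero_le _) (by simp)
  have h₂ : (p : R) ^ n₂ ∣ coeff b h :=
    Nat.findGreatest_spec (P := fun m => (p : R) ^ m ∣ coeff b h) (Nat.zero_le _) (by simp)
  have hn : n₁ + n₂ ≤ n := by
    by_contra! H
    exact hndvd ((pow_dvd_pow _ H).trans (pow_add (p : R) n₁ n₂ ▸ mul_dvd_mul h₁ h₂))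
  have hr : r ≤ ordRWeight p mt n₁ a :=
    ordRge_iff.1 hg a n₁ <| Nat.findGreatest_is_greatest
      (P := fun m => (p : R) ^ m ∣ coeff a g) (Nat.lt_succ_self n₁) (by omega)
  have hs : s ≤ ordRWeight p mt n₂ b :=
    ordRge_iff.1 hh b n₂ <| Nat.findGreatest_is_greatest
      (P := fun m => (p : R) ^ m ∣ coeff b h) (Nat.lt_succ_self n₂) (by omega)
  calc r + s ≤ ordRWeight p mt n₁ a + ordRWeight p mt n₂ b := add_le_add hr hs
    _ = ordRWeight p mt (n₁ + n₂) j := by rw [ordRWeight_add, hab]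
    _ ≤ ordRWeight p mt n j := ordRWeight_mono_left hp mt j hn

theorem ordRge.pow (hp : 1 ≤ p) (hg : ordRge p mt g r) (k : ℕ) :
    ordRge p mt (g ^ k) (k * r) := by
  induction k with
  | zero => exact ordRge_of_nonpos hp _ (by simp)
  | succ k ih =>
    rw [pow_succ]
    exact (ih.mul hp hg).mono (le_of_eq (by push_cast; ring))

end ordRge

def ordRgeX (p mt : ℕ) {R : Type*} [CommRing R] (F : PowerSeries (PowerSeries R)) (r : ℚ) :
    Prop :=
  ∀ v : ℕ, ordRge p mt (coeff v F) (v * r)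

section ordRgeX

variable {p mt : ℕ} {R : Type*} [CommRing R] {F G : PowerSeries (PowerSeries R)} {r : ℚ}

theorem ordRgeX_one (hp : 1 ≤ p) (r : ℚ) : ordRgeX p mt (1 : PowerSeries (PowerSeries R)) r := by
  intro v
  rw [coeff_one]
  split_ifs with hv
  · exact ordRge_of_nonpos hp _ (by simp [hv])
  · exact ordRge_zero p mt _

theorem ordRgeX.mul (hp : 1 ≤ p) (hF : ordRgeX p mt F r) (hG : ordRgeX p mt G r) :
    ordRgeX p mt (F * G) r := by
  intro v
  rw [coeff_mul]
  refine ordRge_sum _ _ fun ab hab => ((hF ab.1).mul hp (hG ab.2)).mono (le_of_eq ?_)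
  rw [← Finset.HasAntidiagonal.mem_antidiagonal.1 hab]
  push_cast
  ring

theorem ordRgeX_prod (hp : 1 ≤ p) {ι : Type*} (t : Finset ι)
    (F : ι → PowerSeries (PowerSeries R)) (hF : ∀ i ∈ t, ordRgeX p mt (F i) r) :
    ordRgeX p mt (∏ i ∈ t, F i) r :=
  Finset.prod_induction F (ordRgeX p mt · r) (fun _ _ => ordRgeX.mul hp) (ordRgeX_one hp r) hF

theorem ordRgeX_EmonoSub (hp : 1 ≤ p) (hr : 0 ≤ r) (E eta : PowerSeries R) (cst : R)
    {u d' : ℕ} (hu : u ≤ d') (heta : ordRge p mt eta (d' * r)) :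
    ordRgeX p mt (EmonoSub E eta cst u) r := by
  intro v
  unfold EmonoSub
  split_ifs with hu0
  · rw [coeff_C]
    split_ifs with hv
    · exact ordRge_of_nonpos hp _ (by simp [hv])
    · exact ordRge_zero p mt _
  · rw [coeff_mk]
    split_ifs with hdvd
    · obtain ⟨k, rfl⟩ := hdvd
      rw [Nat.mul_div_cancel_left k (Nat.pos_of_ne_zero hu0)]
      refine ((heta.pow hp k).C_mul _).mono ?_
      have hu' : (u : ℚ) ≤ d' := by exact_mod_cast hu
      push_cast
      nlinarith [mul_le_mul_of_nonneg_right hu' hr, (k.cast_nonneg : (0 : ℚ) ≤ k)]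
    · exact ordRge_zero p mt _

theorem ordRgeX_EfPartial (hp : 1 ≤ p) (hr : 0 ≤ r) (E : PowerSeries R)
    (Pi : ℕ → PowerSeries R) (co : ℕ → ℕ → R) (d : ℕ → ℕ)
    (hPi : ∀ i, ordRge p mt (Pi i) (d i * r)) (N : ℕ) :
    ordRgeX p mt (EfPartial E Pi co d N) r :=
  ordRgeX_prod hp _ _ fun i _ => ordRgeX_prod hp _ _ fun _ hu =>
    ordRgeX_EmonoSub hp hr _ _ _ (Nat.lt_succ_iff.1 (Finset.mem_range.1 hu)) (hPi i)

end ordRgeX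

section Limit

variable {R : Type*} [CommRing R]

theorem pow_sub_dvd_coeff_mul {q : R} {m : ℕ} {x : PowerSeries R}
    (hx : ∀ j, q ^ (m - j) ∣ coeff j x) (f : PowerSeries R) (j : ℕ) :
    q ^ (m - j) ∣ coeff j (x * f) := by
  rw [coeff_mul]
  refine Finset.dvd_sum fun ab hab => ?_
  have hab := Finset.HasAntidiagonal.mem_antidiagonal.1 hab
  exact ((pow_dvd_pow q (by omega)).trans (hx ab.1)).mul_right _

theorem pow_sub_dvd_coeff_of_mem_span_pow {p m : ℕ} {g : PowerSeries R}
    (hg : g ∈ Ideal.span {(p : PowerSeries R), X} ^ m) (j : ℕ) :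
    (p : R) ^ (m - j) ∣ coeff j g := by
  induction m generalizing g j with
  | zero => simp
  | succ m ih =>
    rw [pow_succ] at hg
    refine Submodule.mul_induction_on hg (fun x hx y hy => ?_)
      (fun x y hx hy => by rw [map_add]; exact dvd_add hx hy)
    obtain ⟨A, B, rfl⟩ := Ideal.mem_span_pair.1 hy
    have hsplit : x * (A * (p : PowerSeries R) + B * X) = x * A * C (p : R) + x * B * X := by
      rw [map_natCast]; ring
    rw [hsplit, map_add, coeff_mul_C]
    refine dvd_add ?_ ?_
    · exact (pow_dvd_pow _ (by omega)).trans
        (pow_succ (p : R) (m - j) ▸ mul_dvd_mul_right (pow_sub_dvd_coeff_mul (ih hx) A j) _)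
    · rcases j with _ | j
      · simp
      · rw [coeff_succ_mul_X, Nat.add_sub_add_right]
        exact pow_sub_dvd_coeff_mul (ih hx) B j

theorem ordRge_of_forall_sub_mem_span_pow {p mt : ℕ} {r : ℚ} {g : PowerSeries R}
    {G : ℕ → PowerSeries R} (hG : ∀ N, ordRge p mt (G N) r)
    (hlim : ∀ N, g - G N ∈ Ideal.span {(p : PowerSeries R), X} ^ (N + 1)) :
    ordRge p mt g r := by
  refine ordRge_iff.2 fun j n hj => ordRge_iff.1 (hG (n + j)) j n fun hdvd => hj ?_
  have hdiff := pow_sub_dvd_coeff_of_mem_span_pow (hlim (n + j)) j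
  rw [show n + j + 1 - j = n + 1 by omega, map_sub] at hdiff
  simpa using dvd_add hdiff hdvd

end Limit

theorem pow_sub_log_dvd_choose {p : ℕ} (hp : p.Prime) (i : ℕ) {j : ℕ} (hj : j ≠ 0) :
    p ^ (i - Nat.log p j) ∣ (p ^ i).choose j := by
  rcases lt_or_ge (p ^ i) j with hlt | hle
  · simp [Nat.choose_eq_zero_of_lt hlt]
  rw [hp.pow_dvd_iff_le_factorization (Nat.choose_pos hle).ne',
    Nat.factorization_choose_prime_pow hp hle hj]
  have : j.factorization p ≤ Nat.log p j :=
    Nat.le_log_of_pow_le hp.one_lt (Nat.ordProj_le p hj)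
  omega

theorem PowerSeries.coeff_one_add_X_pow (R : Type*) [CommRing R] (n k : ℕ) :
    coeff k ((1 + X : PowerSeries R) ^ n) = n.choose k := by
  have h : (1 + X : PowerSeries R) ^ n = ((1 + Polynomial.X : Polynomial R) ^ n).toPowerSeries := by
    simp
  rw [h, Polynomial.coeff_coe, Polynomial.coeff_one_add_X_pow]

section CoeffDvd

variable {R : Type*} [CommRing R] {q : R} {e : ℕ → ℕ} {M : ℕ} {f g : PowerSeries R}

def CoeffDvdUpTo (q : R) (e : ℕ → ℕ) (M : ℕ) (f : PowerSeries R) : Prop :=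
  constantCoeff f = 0 ∧ ∀ j ≤ M, q ^ e j ∣ coeff j f

theorem CoeffDvdUpTo.mono {M' : ℕ} (hf : CoeffDvdUpTo q e M f) (hM : M' ≤ M) :
    CoeffDvdUpTo q e M' f :=
  ⟨hf.1, fun j hj => hf.2 j (hj.trans hM)⟩

theorem CoeffDvdUpTo.mul (he : Antitone e) (hf : CoeffDvdUpTo q e M f)
    (hg : CoeffDvdUpTo q e M g) : CoeffDvdUpTo q e (M + 1) (f * g) := by
  refine ⟨by rw [map_mul, hf.1, zero_mul], fun j hj => ?_⟩
  rw [coeff_mul]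
  refine Finset.dvd_sum fun ⟨a, b⟩ hab => ?_
  rw [Finset.HasAntidiagonal.mem_antidiagonal] at hab
  rcases Nat.eq_zero_or_pos b with rfl | hb
  · simp [hg.1]
  · exact ((pow_dvd_pow q (he (by omega : a ≤ j))).trans (hf.2 a (by omega))).mul_right _

theorem CoeffDvdUpTo.pow_add_two (he : Antitone e) (hf : CoeffDvdUpTo q e M f) (k : ℕ) :
    CoeffDvdUpTo q e (M + 1) (f ^ (k + 2)) := by
  induction k with
  | zero => exact pow_two f ▸ hf.mul he hf
  | succ k ih => exact pow_succ f (k + 2) ▸ (ih.mono M.le_succ).mul he hf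

end CoeffDvd

section ArtinHasse

variable {p : ℕ} {R : Type*} [CommRing R] {E w : PowerSeries R}

theorem IsArtinHasse.coeff_one (hE : IsArtinHasse p E) : coeff 1 E = 1 := by
  have h := congrArg (coeff 0) hE.2
  have hL : constantCoeff (ahLogDeriv p R) = 1 := by
    rw [← coeff_zero_eq_constantCoeff_apply, ahLogDeriv, coeff_mk, if_pos ⟨0, by simp⟩]
  rw [coeff_derivative, coeff_zero_eq_constantCoeff_apply, map_mul, hE.1, hL, one_mul] at h
  simpa using h

theorem coeff_succ_psComp (E w : PowerSeries R) (m : ℕ) :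
    coeff (m + 1) (psComp E w) = coeff 1 E * coeff (m + 1) w +
      ∑ k ∈ Finset.range m, coeff (k + 2) E * coeff (m + 1) (w ^ (k + 2)) := by
  rw [psComp, coeff_mk, Finset.sum_range_succ', Finset.sum_range_succ']
  simp only [pow_zero, coeff_one, Nat.add_one_ne_zero, if_false, mul_zero, add_zero, zero_add,
    pow_one]
  exact add_comm _ _

theorem IsPiAH.pow_sub_log_dvd_coeff (hp : p.Prime) (hE1 : coeff 1 E = 1) {i : ℕ}
    (hw : IsPiAH p E i w) (j : ℕ) : (p : R) ^ (i - Nat.log p j) ∣ coeff j w := by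
  have he : Antitone fun j => i - Nat.log p j := fun _ _ h =>
    Nat.sub_le_sub_left (Nat.log_mono_right h) i
  induction j using Nat.strong_induction_on with
  | _ j IH =>
  obtain _ | m := j
  · simp [hw.1]
  have hcoeff := congrArg (coeff (m + 1)) hw.2
  rw [coeff_succ_psComp, hE1, one_mul, coeff_one_add_X_pow] at hcoeff
  have hlow : CoeffDvdUpTo (p : R) (fun j => i - Nat.log p j) m w :=
    ⟨hw.1, fun j hj => IH j (by omega)⟩
  rw [eq_sub_of_add_eq hcoeff]
  refine dvd_sub ?_ (Finset.dvd_sum fun k _ => ((hlow.pow_add_two he k).2 _ le_rfl).mul_left _)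
  exact_mod_cast Nat.cast_dvd_cast (pow_sub_log_dvd_choose hp i m.succ_ne_zero)

end ArtinHasse

theorem pow_add_succ_le {p : ℕ} (hp : 1 ≤ p) (s t : ℕ) :
    p ^ (s + t + 1) ≤ (t + 1) * (p ^ (s + t) * (p - 1)) + p ^ s := by
  obtain ⟨q, rfl⟩ := Nat.exists_eq_add_of_le' hp
  rw [Nat.add_sub_cancel]
  induction t with
  | zero => exact le_of_eq (by ring)
  | succ t ih =>
    have hmono : (q + 1) ^ (s + t) ≤ (q + 1) ^ (s + t + 1) :=
      Nat.pow_le_pow_right hp (Nat.le_succ _)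
    calc (q + 1) ^ (s + (t + 1) + 1) = (q + 1) ^ (s + t + 1) * q + (q + 1) ^ (s + t + 1) := by
          ring
      _ ≤ (q + 1) ^ (s + t + 1) * q + ((t + 1) * ((q + 1) ^ (s + t) * q) + (q + 1) ^ s) := by
          gcongr
      _ ≤ (t + 1 + 1) * ((q + 1) ^ (s + (t + 1)) * q) + (q + 1) ^ s := by
          rw [← add_assoc s t 1]
          nlinarith [Nat.mul_le_mul_right q hmono]

theorem pow_le_sub_mul_add_pow {p i mt k : ℕ} (hp : 1 ≤ p) (hki : k ≤ i) (hkmt : k + 1 ≤ mt)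
    (s : ℕ) : p ^ k ≤ (i - s) * (p ^ (mt - 2) * (p - 1)) + p ^ s := by
  rcases le_or_gt k s with hks | hsk
  · exact (Nat.pow_le_pow_right hp hks).trans (Nat.le_add_left _ _)
  obtain ⟨t, rfl⟩ := Nat.exists_eq_add_of_lt hsk
  calc p ^ (s + t + 1) ≤ (t + 1) * (p ^ (s + t) * (p - 1)) + p ^ s := pow_add_succ_le hp s t
    _ ≤ (i - s) * (p ^ (mt - 2) * (p - 1)) + p ^ s := by
      gcongr <;> omega

theorem ordRge_of_pow_sub_log_dvd_coeff {p mt i : ℕ} {R : Type*} [CommRing R] (hp : 1 ≤ p)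
    (hmt : 1 ≤ mt) {w : PowerSeries R} (hw0 : constantCoeff w = 0)
    (hw : ∀ j, (p : R) ^ (i - Nat.log p j) ∣ coeff j w) {r : ℚ}
    (hri : r ≤ p ^ i) (hrmt : r ≤ p ^ (mt - 1)) : ordRge p mt w r := by
  refine ordRge_iff.2 fun j n hj => ?_
  have hj0 : j ≠ 0 := by
    rintro rfl
    simp [hw0] at hj
  have hn : i - Nat.log p j ≤ n := by
    by_contra! H
    exact hj ((pow_dvd_pow _ H).trans (hw j))
  have hpj : p ^ Nat.log p j ≤ j := Nat.pow_log_le_self p hj0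
  have hr : r ≤ p ^ min i (mt - 1) := by
    rcases min_choice i (mt - 1) with h | h <;> rw [h] <;> assumption
  unfold ordRWeight
  split_ifs with hmt1
  · rw [hmt1, Nat.sub_self, pow_zero] at hrmt
    exact hrmt.trans (by exact_mod_cast Nat.one_le_iff_ne_zero.2 hj0)
  · have key : p ^ min i (mt - 1) ≤ n * (p ^ (mt - 2) * (p - 1)) + j :=
      (pow_le_sub_mul_add_pow (mt := mt) hp (min_le_left i (mt - 1)) (by omega)
        (Nat.log p j)).trans (by gcongr)
    have hcast : ((p ^ min i (mt - 1) : ℕ) : ℚ) ≤ ((n * (p ^ (mt - 2) * (p - 1)) + j : ℕ) : ℚ) :=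
      Nat.cast_le.2 key
    push_cast [Nat.cast_sub hp] at hcast
    exact hr.trans hcast

theorem Ef_coefficients_ordR_bound_general (p : ℕ) [Fact p.Prime]
    (Fq : Type) [Field Fq] [CharP Fq p]
    (E : PowerSeries ℤ_[p]) (hE : IsArtinHasse p E)
    (Pi : ℕ → PowerSeries ℤ_[p]) (hPi : ∀ i, IsPiAH p E i (Pi i))
    (d : ℕ → ℕ) (c : ℕ → ℕ → Fq) (hd0 : 0 < d 0)
    (D : ℕ) (hD : IsGreatest (Set.range d) D)
    (mt : ℕ) (hmt1 : 1 ≤ mt) (hmt2 : d (mt - 1) = D)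
    (δ : ℚ) (hδ : IsGreatest {x : ℚ | ∃ i : ℕ, x = (d i : ℚ) / (p : ℚ) ^ i} δ)
    (Ef : PowerSeries (PowerSeries (WittVector p Fq)))
    (hEf : IsEfProd p (PowerSeries.map (toWitt p Fq) E)
      (fun i => PowerSeries.map (toWitt p Fq) (Pi i))
      (fun i u => WittVector.teichmuller p (c i u)) d Ef) :
    ∀ u : ℕ, ordRge p mt (PowerSeries.coeff u Ef) ((u : ℚ) / δ) := by
  have hp : p.Prime := Fact.out
  have hdδ (i : ℕ) : (d i : ℚ) ≤ δ * p ^ i := by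
    rw [← div_le_iff₀ (pow_pos (Nat.cast_pos.2 hp.pos : (0 : ℚ) < p) i)]
    exact hδ.2 ⟨i, rfl⟩
  have hδ0 : 0 < δ := by
    have h0 := hdδ 0
    have : (1 : ℚ) ≤ d 0 := by exact_mod_cast hd0
    rw [pow_zero, mul_one] at h0
    linarith
  have hdD (i : ℕ) : (d i : ℚ) ≤ δ * p ^ (mt - 1) := by
    have : d i ≤ D := hD.2 ⟨i, rfl⟩
    exact (Nat.cast_le.2 (this.trans hmt2.ge)).trans (hdδ (mt - 1))
  have hπ (i : ℕ) : ordRge p mt (map (toWitt p Fq) (Pi i)) (d i * (1 / δ)) := by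
    refine (ordRge_of_pow_sub_log_dvd_coeff hp.one_lt.le hmt1 (hPi i).1
      ((hPi i).pow_sub_log_dvd_coeff hp hE.coeff_one) ?_ ?_).map _
    · rw [mul_one_div, div_le_iff₀ hδ0, mul_comm]; exact hdδ i
    · rw [mul_one_div, div_le_iff₀ hδ0, mul_comm]; exact hdD i
  intro u
  refine ordRge_of_forall_sub_mem_span_pow (fun N => ?_) (hEf · u)
  rw [← mul_one_div]
  exact ordRgeX_EfPartial hp.one_lt.le (by positivity) _ _ _ _ hπ N u

/-- Let `δ = max_{i≥0} d_i/p^i`. Then the coefficients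
`α_u` of `E_f(x) = Σ_u α_u x^u` satisfy `ord_R(α_u) ≥ u/δ` for all `u ≥ 0`. -/
theorem Ef_coefficients_ordR_bound (p a : ℕ) [Fact p.Prime] (ha : 1 ≤ a)
    (Fq : Type) [Field Fq] [Fintype Fq] [CharP Fq p] (hq : Fintype.card Fq = p ^ a)
    (E : PowerSeries ℤ_[p]) (hE : IsArtinHasse p E)
    (Pi : ℕ → PowerSeries ℤ_[p]) (hPi : ∀ i, IsPiAH p E i (Pi i))
    (d : ℕ → ℕ) (c : ℕ → ℕ → Fq) (hd0 : 0 < d 0)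
    (hlead : ∀ i, 0 < d i → c i (d i) ≠ 0) (hctop : ∀ i u, d i < u → c i u = 0)
    (D : ℕ) (hD : IsGreatest (Set.range d) D)
    (mt : ℕ) (hmt1 : 1 ≤ mt) (hmt2 : d (mt - 1) = D) (hmt3 : ∀ i < mt - 1, d i ≠ D)
    (δ : ℚ) (hδ : IsGreatest {x : ℚ | ∃ i : ℕ, x = (d i : ℚ) / (p : ℚ) ^ i} δ)
    (Ef : PowerSeries (PowerSeries (WittVector p Fq)))
    (hEf : IsEfProd p (PowerSeries.map (toWitt p Fq) E)
      (fun i => PowerSeries.map (toWitt p Fq) (Pi i))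
      (fun i u => WittVector.teichmuller p (c i u)) d Ef) :
    ∀ u : ℕ, ordRge p mt (PowerSeries.coeff u Ef) ((u : ℚ) / δ) :=
  Ef_coefficients_ordR_bound_general p Fq E hE Pi hPi d c hd0 D hD mt hmt1 hmt2 δ hδ Ef hEf

end
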